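/- arXiv:2605.15278 — 7 statements merged into one kernel-verified Lean document; each statement's English description precedes it below -/
import Mathlib

section
/- For all y ≥ 0, the inverse of the Bennett rate function h(u) = (1+u)log(1+u) − u (restricted to u ≥ 0, where it is strictly increasing) satisfies h⁻¹(y) ≤ √(2y) + y/3. -/
/-!
Put `s = √(2y)`, so that `y = s² / 2` and `√(2y) + y / 3 = s + s² / 6`. As `h` increases on
`[0, ∞)`, it suffices to show `s² / 2 ≤ h (s + s² / 6)`. Both sides vanish at `s = 0`, and since
`h' u = log (1 + u)`, comparing derivatives reduces this to `s ≤ (1 + s / 3) log q` with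
`q = 1 + s + s² / 6`. Both sides of that vanish at `s = 0` as well, and bounding `log q` from below
by `1 - q⁻¹` in the derivative of the difference makes it cancel exactly.
-/

open Real Set

/-- The Bennett rate function. -/
noncomputable def bennettH (u : ℝ) : ℝ := (1 + u) * Real.log (1 + u) - u

lemma monotoneOn_Ici_of_hasDerivAt_nonneg {f f' : ℝ → ℝ} {a : ℝ}
    (hf : ∀ x, a ≤ x → HasDerivAt f (f' x) x) (hf' : ∀ x, a < x → 0 ≤ f' x) :
    MonotoneOn f (Ici a) :=
  monotoneOn_of_hasDerivWithinAt_nonneg (convex_Ici a)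
    (fun x hx => (hf x hx).continuousAt.continuousWithinAt)
    (fun x hx => by
      rw [interior_Ici] at hx
      exact (hf x (le_of_lt hx)).hasDerivWithinAt)
    (fun x hx => by
      rw [interior_Ici] at hx
      exact hf' x hx)

lemma hasDerivAt_bennettH {u : ℝ} (hu : -1 < u) : HasDerivAt bennettH (log (1 + u)) u := by
  have h : HasDerivAt (fun x => (1 + x) * log (1 + x) - x) ((log (1 + u) + 1) * 1 - 1) u :=
    ((hasDerivAt_mul_log (show 1 + u ≠ 0 by linarith)).comp u ((hasDerivAt_id u).const_add 1)).sub
      (hasDerivAt_id u)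
  exact h.congr_deriv (by ring)

lemma bennettH_strictMonoOn : StrictMonoOn bennettH (Ici 0) :=
  strictMonoOn_of_hasDerivWithinAt_pos (convex_Ici 0)
    (fun x hx =>
      (hasDerivAt_bennettH (by linarith [mem_Ici.mp hx])).continuousAt.continuousWithinAt)
    (fun x hx => by
      rw [interior_Ici] at hx
      exact (hasDerivAt_bennettH (by linarith [mem_Ioi.mp hx])).hasDerivWithinAt)
    (fun x hx => by
      rw [interior_Ici] at hx
      exact log_pos (by linarith [mem_Ioi.mp hx]))

lemma hasDerivAt_add_sq_div_six (s : ℝ) :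
    HasDerivAt (fun s => s + s ^ 2 / 6) (1 + s / 3) s :=
  ((hasDerivAt_id s).add ((hasDerivAt_pow 2 s).div_const 6)).congr_deriv (by simp; ring)

lemma le_one_add_div_three_mul_log {s : ℝ} (hs : 0 ≤ s) :
    s ≤ (1 + s / 3) * log (1 + (s + s ^ 2 / 6)) := by
  have hmono : MonotoneOn (fun s => (1 + s / 3) * log (1 + (s + s ^ 2 / 6)) - s) (Ici 0) := by
    refine monotoneOn_Ici_of_hasDerivAt_nonneg
      (f' := fun s => 1 / 3 * log (1 + (s + s ^ 2 / 6))
        + (1 + s / 3) * ((1 + s / 3) / (1 + (s + s ^ 2 / 6))) - 1)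
      (fun s hs => ?_) (fun s hs => ?_)
    · have hq : 1 + (s + s ^ 2 / 6) ≠ 0 := by positivity
      exact ((((hasDerivAt_id s).div_const 3).const_add 1).mul
        (((hasDerivAt_add_sq_div_six s).const_add 1).log hq)).sub (hasDerivAt_id s)
    · have hq : 0 < 1 + (s + s ^ 2 / 6) := by positivity
      have hlog := one_sub_inv_le_log_of_pos hq
      have hcancel : 1 / 3 * (1 - (1 + (s + s ^ 2 / 6))⁻¹)
          + (1 + s / 3) * ((1 + s / 3) / (1 + (s + s ^ 2 / 6))) - 1 = 0 := by
        field_simp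
        ring
      linarith
  simpa using hmono self_mem_Ici hs hs

lemma sq_div_two_le_bennettH {s : ℝ} (hs : 0 ≤ s) : s ^ 2 / 2 ≤ bennettH (s + s ^ 2 / 6) := by
  have hmono : MonotoneOn (fun s => bennettH (s + s ^ 2 / 6) - s ^ 2 / 2) (Ici 0) := by
    refine monotoneOn_Ici_of_hasDerivAt_nonneg
      (f' := fun s => log (1 + (s + s ^ 2 / 6)) * (1 + s / 3) - s)
      (fun s hs => ?_) (fun s hs => ?_)
    · have hsq : HasDerivAt (fun s => s ^ 2 / 2) s s :=
        ((hasDerivAt_pow 2 s).div_const 2).congr_deriv (by simp)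
      exact ((hasDerivAt_bennettH (by linarith [sq_nonneg s])).comp s
        (hasDerivAt_add_sq_div_six s)).sub hsq
    · linarith [le_one_add_div_three_mul_log hs.le]
  simpa [bennettH] using hmono self_mem_Ici hs hs

/-- For `y ≥ 0`, the inverse of the Bennett rate function (restricted to `u ≥ 0`,
where it is strictly increasing) satisfies `h⁻¹ y ≤ √(2y) + y/3`: i.e. if `h u = y`
with `u ≥ 0`, then `u ≤ √(2y) + y/3`. -/
theorem bennett_inverse_upper_bound (y u : ℝ) (hy : 0 ≤ y) (hu : 0 ≤ u)
    (huy : bennettH u = y) :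
    u ≤ Real.sqrt (2 * y) + y / 3 := by
  set s := √(2 * y)
  have hs : 0 ≤ s := sqrt_nonneg _
  have hsq : s ^ 2 = 2 * y := sq_sqrt (by linarith)
  have hbound : bennettH u ≤ bennettH (s + s ^ 2 / 6) := by
    rw [huy]
    linarith [sq_div_two_le_bennettH hs]
  rw [bennettH_strictMonoOn.le_iff_le hu (by simp only [mem_Ici]; positivity), hsq] at hbound
  linarith
end

section
/- For all x ≥ 0, log(1 + x + x²/6) ≥ 3x/(x+3). -/
/-!
Put `u = 2x/(x+6)`, so that `2u/(u+2) = x/(x+3)`. The Padé-type bound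
`2u/(u+2) ≤ log (1+u)` gives `3x/(x+3) ≤ 3 log (1+u)`, and
`(1+u)³ ≤ 1 + x + x²/6` because the difference of the cleared-denominator sides is
`x³(x² + 24x + 60)/6 ≥ 0`.
-/

open Real

lemma one_add_two_mul_div_add_six_pow_three_le {x : ℝ} (hx : 0 ≤ x) :
    (1 + 2 * x / (x + 6)) ^ 3 ≤ 1 + x + x ^ 2 / 6 := by
  have hx6 : 0 < x + 6 := by linarith
  rw [one_add_div hx6.ne', div_pow, div_le_iff₀ (by positivity)]
  nlinarith [mul_nonneg (pow_nonneg hx 3) (by positivity : 0 ≤ x ^ 2 + 24 * x + 60)]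

/-- For all `x ≥ 0`, `log (1 + x + x²/6) ≥ 3x/(x+3)`. -/
theorem log_ge_ratio (x : ℝ) (hx : 0 ≤ x) :
    Real.log (1 + x + x ^ 2 / 6) ≥ 3 * x / (x + 3) := by
  set u := 2 * x / (x + 6) with hu_def
  have hu : 0 ≤ u := by positivity
  calc 3 * x / (x + 3) = 3 * (2 * u / (u + 2)) := by
        rw [hu_def]; field_simp; ring
    _ ≤ 3 * log (1 + u) := by gcongr; exact le_log_one_add_of_nonneg hu
    _ ≤ log (1 + x + x ^ 2 / 6) := by
        exact_mod_cast le_log_of_pow_le (by positivity)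
          (one_add_two_mul_div_add_six_pow_three_le hx)
end

section
/- For independent mean-zero self-adjoint bounded random operators X₁,…,Xₙ on a separable Hilbert space, any convex nonnegative continuous function f : ℝ → ℝ≥0 with f applied via functional calculus, and any θ ∈ ℝ, the real-valued process i ↦ tr(f(θ·Sᵢ)), where Sᵢ = X₁ + ⋯ + Xᵢ, is a nonnegative submartingale with respect to the natural filtration (assuming all traces are finite). -/
/-!
Write `G A = re (tr f(A))`. `G` is convex on Hermitian matrices: if `(u_k)` is an eigenbasis of
`M = t A + s B` with eigenvalues `λ_k`, then `λ_k = t ⟨u_k, A u_k⟩ + s ⟨u_k, B u_k⟩`, and convexity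
of `f` together with Jensen's inequality for the spectral distribution of `A` at the unit vector
`u_k` give `f(λ_k) ≤ t ⟨u_k, f(A) u_k⟩ + s ⟨u_k, f(B) u_k⟩`; summing over `k` gives
`G M ≤ t G A + s G B`.
For `i ≤ j` the increment `Y = S_j - S_i` is independent of `ℱ_i` and has mean zero, so on an
`ℱ_i`-set one may freeze `S_i` and average over `Y` alone; Jensen's inequality for the convex
function `A ↦ G (θ A)` then gives `E[G(θ S_i); s] ≤ E[G(θ (S_i + Y)); s]`.
-/

open MeasureTheory Matrix Finset
open scoped Matrix.Norms.L2Operator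

noncomputable instance matrixMeasurableSpace {m n : Type*} [Fintype m] [Fintype n] :
    MeasurableSpace (Matrix m n ℂ) := borel _

instance matrixBorelSpace {m n : Type*} [Fintype m] [Fintype n] :
    BorelSpace (Matrix m n ℂ) := ⟨rfl⟩

open ProbabilityTheory

namespace Matrix

variable {n 𝕜 : Type*} [RCLike 𝕜] [Fintype n] [DecidableEq n]

lemma conjTranspose_mul_diagonal_mul_apply_self (W : Matrix n n 𝕜) (v : n → ℝ) (k : n) :
    (Wᴴ * diagonal (RCLike.ofReal ∘ v : n → 𝕜) * W : Matrix n n 𝕜) k k =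
      ((∑ l, ‖W l k‖ ^ 2 * v l : ℝ) : 𝕜) := by
  simp only [mul_apply, diagonal_apply, conjTranspose_apply, mul_ite, mul_zero, sum_ite_eq',
    mem_univ, if_true, RCLike.ofReal_sum, RCLike.ofReal_mul, RCLike.ofReal_pow,
    Function.comp_apply]
  refine sum_congr rfl fun l _ => ?_
  rw [mul_right_comm, RCLike.star_def, RCLike.conj_mul, mul_comm]

lemma sum_norm_sq_apply_eq_one_of_mem_unitaryGroup {W : Matrix n n 𝕜}
    (hW : W ∈ unitaryGroup n 𝕜) (k : n) : ∑ l, ‖W l k‖ ^ 2 = 1 := by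
  have h := conjTranspose_mul_diagonal_mul_apply_self W 1 k
  have h1 : diagonal (RCLike.ofReal ∘ (1 : n → ℝ) : n → 𝕜) = 1 := by
    rw [← diagonal_one]; congr; ext; simp
  simp only [h1, mul_one, ← star_eq_conjTranspose, mem_unitaryGroup_iff'.mp hW,
    one_apply_eq, Pi.one_apply] at h
  exact_mod_cast h.symm

lemma trace_eq_sum_conjTranspose_mul_mul_apply {V : Matrix n n 𝕜} (hV : V ∈ unitaryGroup n 𝕜)
    (N : Matrix n n 𝕜) : trace N = ∑ k, (Vᴴ * N * V : Matrix n n 𝕜) k k := by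
  change _ = trace (Vᴴ * N * V)
  rw [trace_mul_cycle, ← star_eq_conjTranspose, mem_unitaryGroup_iff.mp hV, one_mul]

namespace IsHermitian
variable {A : Matrix n n 𝕜} (hA : A.IsHermitian)
include hA

lemma re_trace_cfc (g : ℝ → ℝ) : RCLike.re (trace (cfc g A)) = ∑ k, g (hA.eigenvalues k) := by
  rw [hA.cfc_eq, IsHermitian.cfc, Unitary.conjStarAlgAut_apply, trace_mul_cycle,
    Unitary.coe_star_mul_self, one_mul, trace_diagonal, map_sum]
  simp

lemma conjTranspose_eigenvectorUnitary_mul_mul_apply_self (k : n) :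
    ((hA.eigenvectorUnitary : Matrix n n 𝕜)ᴴ * A * hA.eigenvectorUnitary : Matrix n n 𝕜) k k =
      hA.eigenvalues k := by
  have h := hA.conjStarAlgAut_star_eigenvectorUnitary
  rw [Unitary.conjStarAlgAut_apply, Unitary.coe_star, star_star, star_eq_conjTranspose] at h
  simp [h]

lemma conjTranspose_mul_cfc_mul_apply_self (g : ℝ → ℝ) (V : Matrix n n 𝕜) (k : n) :
    (Vᴴ * cfc g A * V : Matrix n n 𝕜) k k =
      ((∑ l, ‖(star (hA.eigenvectorUnitary : Matrix n n 𝕜) * V) l k‖ ^ 2 *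
        g (hA.eigenvalues l) : ℝ) : 𝕜) := by
  rw [← conjTranspose_mul_diagonal_mul_apply_self, hA.cfc_eq, IsHermitian.cfc,
    Unitary.conjStarAlgAut_apply]
  simp only [conjTranspose_mul, star_eq_conjTranspose, conjTranspose_conjTranspose, mul_assoc]
  rfl

lemma map_re_conj_apply_le_re_conj_cfc_apply {f : ℝ → ℝ} (hf : ConvexOn ℝ Set.univ f)
    {V : Matrix n n 𝕜} (hV : V ∈ unitaryGroup n 𝕜) (k : n) :
    f (RCLike.re ((Vᴴ * A * V : Matrix n n 𝕜) k k)) ≤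
      RCLike.re ((Vᴴ * cfc f A * V : Matrix n n 𝕜) k k) := by
  set W := star (hA.eigenvectorUnitary : Matrix n n 𝕜) * V
  have hW : W ∈ unitaryGroup n 𝕜 :=
    Submonoid.mul_mem _ (Unitary.star_mem hA.eigenvectorUnitary.2) hV
  conv_lhs => rw [← cfc_id ℝ A hA.isSelfAdjoint]
  rw [hA.conjTranspose_mul_cfc_mul_apply_self, hA.conjTranspose_mul_cfc_mul_apply_self,
    RCLike.ofReal_re, RCLike.ofReal_re]
  simpa only [smul_eq_mul, id] using hf.map_sum_le (fun l _ => sq_nonneg ‖W l k‖)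
    (sum_norm_sq_apply_eq_one_of_mem_unitaryGroup hW k) fun l _ => Set.mem_univ (hA.eigenvalues l)

end IsHermitian

lemma re_trace_cfc_nonneg {f : ℝ → ℝ} (hf : ∀ x, 0 ≤ f x) (A : Matrix n n 𝕜) :
    0 ≤ RCLike.re (trace (cfc f A)) := by
  by_cases hA : IsSelfAdjoint A
  · rw [IsHermitian.re_trace_cfc hA]
    exact sum_nonneg fun k _ => hf _
  · simp [cfc_apply_of_not_predicate A hA]

theorem convexOn_re_trace_cfc {f : ℝ → ℝ} (hf : ConvexOn ℝ Set.univ f) :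
    ConvexOn ℝ (selfAdjoint.submodule ℝ (Matrix n n 𝕜) : Set (Matrix n n 𝕜))
      (fun A => RCLike.re (trace (cfc f A))) := by
  refine ⟨Submodule.convex _, fun a (ha : a.IsHermitian) b (hb : b.IsHermitian) t s ht hs hts => ?_⟩
  have hM : (t • a + s • b).IsHermitian :=
    ((IsSelfAdjoint.all t).smul ha.isSelfAdjoint).add
      ((IsSelfAdjoint.all s).smul hb.isSelfAdjoint)
  set U := (hM.eigenvectorUnitary : Matrix n n 𝕜)
  have hU : U ∈ unitaryGroup n 𝕜 := hM.eigenvectorUnitary.2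
  have hre_trace (N : Matrix n n 𝕜) :
      RCLike.re (trace N) = ∑ k, RCLike.re ((Uᴴ * N * U) k k) := by
    rw [trace_eq_sum_conjTranspose_mul_mul_apply hU, map_sum]
  have heigen (k : n) : hM.eigenvalues k =
      t * RCLike.re ((Uᴴ * a * U) k k) + s * RCLike.re ((Uᴴ * b * U) k k) := by
    rw [← RCLike.ofReal_re (K := 𝕜) (hM.eigenvalues k),
      ← hM.conjTranspose_eigenvectorUnitary_mul_mul_apply_self]
    simp [Matrix.mul_add, Matrix.add_mul, RCLike.smul_re]
    rfl
  calc RCLike.re (trace (cfc f (t • a + s • b))) = ∑ k, f (hM.eigenvalues k) := hM.re_trace_cfc f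
    _ ≤ ∑ k, (t * RCLike.re ((Uᴴ * cfc f a * U) k k) +
          s * RCLike.re ((Uᴴ * cfc f b * U) k k)) := by
      refine sum_le_sum fun k _ => ?_
      calc f (hM.eigenvalues k)
          ≤ t * f (RCLike.re ((Uᴴ * a * U) k k)) + s * f (RCLike.re ((Uᴴ * b * U) k k)) := by
            rw [heigen]; exact hf.2 trivial trivial ht hs hts
        _ ≤ _ := by
            gcongr
            exacts [ha.map_re_conj_apply_le_re_conj_cfc_apply hf hU k,
              hb.map_re_conj_apply_le_re_conj_cfc_apply hf hU k]
    _ = t * RCLike.re (trace (cfc f a)) + s * RCLike.re (trace (cfc f b)) := by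
      rw [hre_trace, hre_trace, mul_sum, mul_sum, sum_add_distrib]

end Matrix

lemma ConvexOn.continuousOn_submodule {E : Type*} [NormedAddCommGroup E] [NormedSpace ℝ E]
    [FiniteDimensional ℝ E] {p : Submodule ℝ E} {φ : E → ℝ} (hφ : ConvexOn ℝ p φ) :
    ContinuousOn φ p := by
  have h : ConvexOn ℝ (Set.univ : Set p) (φ ∘ p.subtype) := by
    have h := hφ.comp_linearMap p.subtype
    rwa [show p.subtype ⁻¹' p = Set.univ from Set.eq_univ_of_forall fun x => x.2] at h
  have hc : Continuous (φ ∘ p.subtype) := continuousOn_univ.mp (h.continuousOn isOpen_univ)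
  exact continuousOn_iff_continuous_domRestrict.mpr hc

lemma ContinuousOn.exists_measurable_eqOn {α γ : Type*} [TopologicalSpace α] [MeasurableSpace α]
    [OpensMeasurableSpace α] [TopologicalSpace γ] [MeasurableSpace γ] [BorelSpace γ] [Zero γ]
    {f : α → γ} {s : Set α} (hs : IsClosed s) (hf : ContinuousOn f s) :
    ∃ g : α → γ, Measurable g ∧ Set.EqOn f g s := by
  classical
  exact ⟨s.piecewise f 0, hf.measurable_piecewise continuousOn_const hs.measurableSet,
    fun x hx => (Set.piecewise_eq_of_mem _ _ _ hx).symm⟩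

lemma ContinuousOn.integrable_comp_of_norm_le {E Ω : Type*} [NormedAddCommGroup E]
    [ProperSpace E] [MeasurableSpace E] [MeasurableSpace Ω] {μ : Measure Ω}
    [IsFiniteMeasure μ] {s : Set E} (hs : IsClosed s) {φ : E → ℝ} (hφ : ContinuousOn φ s)
    (hφm : Measurable φ) {Z : Ω → E} (hZ : Measurable Z) (hZs : ∀ ω, Z ω ∈ s) {R : ℝ}
    (hZR : ∀ ω, ‖Z ω‖ ≤ R) : Integrable (fun ω => φ (Z ω)) μ := by
  obtain ⟨B, hB⟩ := ((isCompact_closedBall (0 : E) R).inter_left hs).exists_bound_of_continuousOn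
    (hφ.mono Set.inter_subset_left)
  exact .of_bound (hφm.comp hZ).aestronglyMeasurable B
    (ae_of_all _ fun ω => hB _ ⟨hZs ω, by simpa using hZR ω⟩)

lemma ConvexOn.le_integral_comp_add_of_integral_eq_zero {E Ω : Type*} [NormedAddCommGroup E]
    [NormedSpace ℝ E] [CompleteSpace E] [MeasurableSpace Ω] {μ : Measure Ω} [IsProbabilityMeasure μ]
    {s : Set E} {φ : E → ℝ} (hφ : ConvexOn ℝ s φ) (hφc : ContinuousOn φ s) (hs : IsClosed s)
    {a : E} {Y : Ω → E} (hY : Integrable Y μ) (hY0 : ∫ ω, Y ω ∂μ = 0)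
    (hYs : ∀ᵐ ω ∂μ, a + Y ω ∈ s) (hφY : Integrable (fun ω => φ (a + Y ω)) μ) :
    φ a ≤ ∫ ω, φ (a + Y ω) ∂μ := by
  have h := hφ.map_integral_le hφc hs hYs ((integrable_const a).add hY) hφY
  rwa [integral_add (integrable_const a) hY, hY0, add_zero, integral_const, probReal_univ,
    one_smul] at h

namespace ProbabilityTheory
variable {Ω α β : Type*} {m mΩ : MeasurableSpace Ω} [MeasurableSpace α] [mβ : MeasurableSpace β]
  {μ : Measure Ω} {Z : Ω → α} {Y : Ω → β} {s : Set Ω}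

lemma Indep.map_restrict_prodMk (hm : m ≤ mΩ) [IsFiniteMeasure μ] (hZ : Measurable[m] Z)
    (hY : Measurable Y) (h : Indep m (mβ.comap Y) μ) (hs : MeasurableSet[m] s) :
    (μ.restrict s).map (fun ω => (Z ω, Y ω)) = ((μ.restrict s).map Z).prod (μ.map Y) := by
  have hZ' : Measurable Z := hZ.mono hm le_rfl
  refine (Measure.prod_eq fun A B hA hB => ?_).symm
  rw [Measure.map_apply (hZ'.prodMk hY) (hA.prod hB), Measure.map_apply hZ' hA,
    Measure.map_apply hY hB, Measure.restrict_apply (hZ'.prodMk hY (hA.prod hB)),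
    Measure.restrict_apply (hZ' hA), Set.mk_preimage_prod, Set.inter_right_comm,
    (Indep_iff _ _ μ).mp h _ _ ((hZ hA).inter hs) ⟨B, hB, rfl⟩]

lemma Indep.setIntegral_comp_prodMk {E : Type*} [NormedAddCommGroup E] [NormedSpace ℝ E]
    [CompleteSpace E] (hm : m ≤ mΩ) [IsFiniteMeasure μ] (hZ : Measurable[m] Z)
    (hY : Measurable Y) (h : Indep m (mβ.comap Y) μ) (hs : MeasurableSet[m] s)
    {g : α × β → E} (hg : StronglyMeasurable g)
    (hgi : Integrable (fun q : Ω × Ω => g (Z q.1, Y q.2)) (μ.prod μ)) :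
    ∫ ω in s, g (Z ω, Y ω) ∂μ = ∫ ω in s, ∫ ω', g (Z ω, Y ω') ∂μ ∂μ := by
  have hZ' : Measurable Z := hZ.mono hm le_rfl
  have hgi' : Integrable g (((μ.restrict s).map Z).prod (μ.map Y)) := by
    rw [Measure.map_prod_map _ _ hZ' hY, integrable_map_measure hg.aestronglyMeasurable
      (hZ'.prodMap hY).aemeasurable, Measure.restrict_prod_eq_prod_univ]
    exact hgi.restrict
  calc ∫ ω in s, g (Z ω, Y ω) ∂μ = ∫ q, g q ∂((μ.restrict s).map (fun ω => (Z ω, Y ω))) :=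
        (integral_map (hZ'.prodMk hY).aemeasurable hg.aestronglyMeasurable).symm
    _ = ∫ z, ∫ y, g (z, y) ∂(μ.map Y) ∂((μ.restrict s).map Z) := by
        rw [h.map_restrict_prodMk hm hZ hY hs, integral_prod g hgi']
    _ = ∫ ω in s, ∫ ω', g (Z ω, Y ω') ∂μ ∂μ := by
        rw [integral_map hZ'.aemeasurable]
        · congr 1 with ω
          exact integral_map hY.aemeasurable
            (hg.comp_measurable measurable_prodMk_left).aestronglyMeasurable
        · exact hg.integral_prod_right'.aestronglyMeasurable

theorem iIndepFun.indep_natural_comap_sum {ι E : Type*} [LinearOrder ι] [NormedAddCommGroup E]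
    [SecondCountableTopology E] [mE : MeasurableSpace E] [BorelSpace E] {X : ι → Ω → E}
    (hX : ∀ i, StronglyMeasurable (X i)) (hindep : iIndepFun X μ) {i : ι} {t : Finset ι}
    (ht : ∀ k ∈ t, i < k) :
    Indep (Filtration.natural X hX i) (mE.comap fun ω => ∑ k ∈ t, X k ω) μ := by
  have hdisj : Disjoint {k | k ≤ i} (t : Set ι) :=
    Set.disjoint_left.mpr fun k hki hkt => (ht k hkt).not_ge hki
  refine indep_of_indep_of_le_right
    (indep_iSup_of_disjoint (fun k => (hX k).measurable.comap_le) hindep hdisj) ?_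
  have hX_le (k : ι) (hk : k ∈ t) : MeasurableSpace.comap (X k) mE ≤
      ⨆ k ∈ (t : Set ι), MeasurableSpace.comap (X k) mE :=
    le_biSup (fun k => MeasurableSpace.comap (X k) mE) (mem_coe.mpr hk)
  exact Measurable.comap_le <| Finset.measurable_sum t fun k hk =>
    (comap_measurable (X k)).mono (hX_le k hk) le_rfl

end ProbabilityTheory

section
variable {E : Type*} [NormedAddCommGroup E] [NormedSpace ℝ E] [FiniteDimensional ℝ E]
  [mE : MeasurableSpace E] [BorelSpace E]

theorem ConvexOn.setIntegral_le_setIntegral_add_of_indep {Ω : Type*} {m mΩ : MeasurableSpace Ω}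
    {μ : Measure Ω} [IsProbabilityMeasure μ] {p : Submodule ℝ E} {φ : E → ℝ}
    (hφ : ConvexOn ℝ p φ) (hφm : Measurable φ) (hm : m ≤ mΩ) {Z Y : Ω → E}
    (hZ : Measurable[m] Z) (hY : Measurable Y) (hindep : Indep m (mE.comap Y) μ)
    (hY0 : ∫ ω, Y ω ∂μ = 0) (hZp : ∀ ω, Z ω ∈ p) (hYp : ∀ ω, Y ω ∈ p) {R R' : ℝ}
    (hZR : ∀ ω, ‖Z ω‖ ≤ R) (hYR : ∀ ω, ‖Y ω‖ ≤ R') {s : Set Ω} (hs : MeasurableSet[m] s) :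
    ∫ ω in s, φ (Z ω) ∂μ ≤ ∫ ω in s, φ (Z ω + Y ω) ∂μ := by
  have hZ' : Measurable Z := hZ.mono hm le_rfl
  have hp : IsClosed (p : Set E) := p.closed_of_finiteDimensional
  have hφc : ContinuousOn φ p := hφ.continuousOn_submodule
  have hsum_mem (ω ω' : Ω) : Z ω + Y ω' ∈ p := p.add_mem (hZp ω) (hYp ω')
  have hsum_norm (ω ω' : Ω) : ‖Z ω + Y ω'‖ ≤ R + R' :=
    (norm_add_le _ _).trans (add_le_add (hZR ω) (hYR ω'))
  have hprod_int : Integrable (fun q : Ω × Ω => φ (Z q.1 + Y q.2)) (μ.prod μ) :=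
    hφc.integrable_comp_of_norm_le hp hφm
      ((hZ'.comp measurable_fst).add (hY.comp measurable_snd))
      (fun q => hsum_mem q.1 q.2) (fun q => hsum_norm q.1 q.2)
  have hjensen (ω : Ω) : φ (Z ω) ≤ ∫ ω', φ (Z ω + Y ω') ∂μ :=
    hφ.le_integral_comp_add_of_integral_eq_zero hφc hp
      (.of_bound hY.aestronglyMeasurable R' (ae_of_all _ hYR)) hY0 (ae_of_all _ (hsum_mem ω))
      (hφc.integrable_comp_of_norm_le hp hφm (measurable_const.add hY) (hsum_mem ω)
        (hsum_norm ω))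
  calc ∫ ω in s, φ (Z ω) ∂μ ≤ ∫ ω in s, ∫ ω', φ (Z ω + Y ω') ∂μ ∂μ :=
        setIntegral_mono (hφc.integrable_comp_of_norm_le hp hφm hZ' hZp hZR).integrableOn
          hprod_int.integral_prod_left.integrableOn hjensen
    _ = ∫ ω in s, φ (Z ω + Y ω) ∂μ :=
        (hindep.setIntegral_comp_prodMk hm hZ hY hs (g := fun q => φ (q.1 + q.2))
          (hφm.comp measurable_add).stronglyMeasurable hprod_int).symm

theorem ConvexOn.submartingale_sum_Iic {ι Ω : Type*} [LinearOrder ι] [LocallyFiniteOrderBot ι]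
    [MeasurableSpace Ω] {μ : Measure Ω} [IsProbabilityMeasure μ] {X : ι → Ω → E}
    (hX : ∀ i, StronglyMeasurable (X i)) (hindep : iIndepFun X μ)
    (hmean : ∀ i, ∫ ω, X i ω ∂μ = 0) {C : ℝ} (hbd : ∀ i ω, ‖X i ω‖ ≤ C)
    {p : Submodule ℝ E} (hXp : ∀ i ω, X i ω ∈ p) {φ : E → ℝ} (hφ : ConvexOn ℝ p φ) :
    Submartingale (fun i ω => φ (∑ j ∈ Iic i, X j ω)) (Filtration.natural X hX) μ := by
  set ℱ := Filtration.natural X hX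
  have hp : IsClosed (p : Set E) := p.closed_of_finiteDimensional
  obtain ⟨ψ, hψm, hφψ⟩ := hφ.continuousOn_submodule.exists_measurable_eqOn hp
  have hsum_mem (t : Finset ι) (ω : Ω) : ∑ k ∈ t, X k ω ∈ p := p.sum_mem fun k _ => hXp k ω
  have hsum_norm (t : Finset ι) (ω : Ω) : ‖∑ k ∈ t, X k ω‖ ≤ t.card * C :=
    (norm_sum_le _ _).trans (by simpa using sum_le_sum fun k (_ : k ∈ t) => hbd k ω)
  have hsum_meas (t : Finset ι) : Measurable (fun ω => ∑ k ∈ t, X k ω) :=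
    Finset.measurable_sum t fun k _ => (hX k).measurable
  have hS_meas (i : ι) : Measurable[ℱ i] (fun ω => ∑ j ∈ Iic i, X j ω) :=
    Finset.measurable_sum _ fun j hj =>
      (Filtration.stronglyAdapted_natural hX j).measurable.mono (ℱ.mono (mem_Iic.mp hj)) le_rfl
  -- `φ` is arbitrary off `p`, so pass to a measurable function that agrees with it on `p`.
  have hφS : (fun i ω => φ (∑ j ∈ Iic i, X j ω)) = fun i ω => ψ (∑ j ∈ Iic i, X j ω) :=
    funext₂ fun i ω => hφψ (hsum_mem _ ω)
  have hψ : ConvexOn ℝ p ψ := hφ.congr hφψ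
  rw [hφS]
  refine submartingale_of_setIntegral_le (fun i => (hψm.comp (hS_meas i)).stronglyMeasurable)
    (fun i => hψ.continuousOn_submodule.integrable_comp_of_norm_le hp hψm
      (hsum_meas _) (hsum_mem _) (hsum_norm _)) fun i j hij s hs => ?_
  have hsplit (ω : Ω) :
      ∑ k ∈ Iic j, X k ω = ∑ k ∈ Iic i, X k ω + ∑ k ∈ Iic j \ Iic i, X k ω := by
    rw [add_comm, sum_sdiff (Iic_subset_Iic.mpr hij)]
  have hincr_lt : ∀ k ∈ Iic j \ Iic i, i < k := fun k hk =>
    lt_of_not_ge (mem_Iic.not.mp (mem_sdiff.mp hk).2)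
  have hincr_mean : ∫ ω, ∑ k ∈ Iic j \ Iic i, X k ω ∂μ = 0 := by
    rw [integral_finsetSum _ fun k _ =>
      .of_bound (hX k).aestronglyMeasurable C (ae_of_all _ (hbd k))]
    simp [hmean]
  simp_rw [hsplit]
  exact hψ.setIntegral_le_setIntegral_add_of_indep hψm (ℱ.le i) (hS_meas i) (hsum_meas _)
    (hindep.indep_natural_comap_sum hX hincr_lt) hincr_mean (hsum_mem _) (hsum_mem _)
    (hsum_norm _) (hsum_norm _) hs

end

theorem trace_convex_submartingale_general {d n : ℕ} {Ω : Type*} [MeasurableSpace Ω]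
    (μ : Measure Ω) [IsProbabilityMeasure μ]
    (X : Fin n → Ω → Matrix (Fin d) (Fin d) ℂ)
    (hX : ∀ i, MeasureTheory.StronglyMeasurable (X i))
    (hindep : ProbabilityTheory.iIndepFun X μ)
    (hsa : ∀ i ω, (X i ω).IsHermitian)
    (hmean : ∀ i, (∫ ω, X i ω ∂μ) = 0)
    (C : ℝ) (hbd : ∀ i ω, ‖X i ω‖ ≤ C)
    (f : ℝ → ℝ) (hfconv : ConvexOn ℝ Set.univ f)
    (hfnonneg : ∀ x, 0 ≤ f x) (θ : ℝ) :
    MeasureTheory.Submartingale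
        (fun (i : Fin n) (ω : Ω) =>
          (Matrix.trace (cfc f (θ • ∑ j ∈ Finset.Iic i, X j ω))).re)
        (MeasureTheory.Filtration.natural X hX) μ ∧
      ∀ (i : Fin n) (ω : Ω),
        0 ≤ (Matrix.trace (cfc f (θ • ∑ j ∈ Finset.Iic i, X j ω))).re := by
  set p := selfAdjoint.submodule ℝ (Matrix (Fin d) (Fin d) ℂ)
  have hG : ConvexOn ℝ p fun A : Matrix (Fin d) (Fin d) ℂ => (trace (cfc f A)).re :=
    convexOn_re_trace_cfc hfconv
  have hφ : ConvexOn ℝ p fun A : Matrix (Fin d) (Fin d) ℂ => (trace (cfc f (θ • A))).re :=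
    ⟨p.convex, fun a ha b hb t s ht hs hts => by
      simpa only [smul_add, smul_comm θ] using
        hG.2 (p.smul_mem θ ha) (p.smul_mem θ hb) ht hs hts⟩
  exact ⟨hφ.submartingale_sum_Iic hX hindep hmean hbd (fun i ω => (hsa i ω).isSelfAdjoint),
    fun i ω => re_trace_cfc_nonneg (𝕜 := ℂ) hfnonneg _⟩

/-- For independent mean-zero self-adjoint bounded random matrices `X₁,…,Xₙ`
(here: random Hermitian complex `d×d` matrices), any convex nonnegative
continuous `f : ℝ → ℝ` applied via the continuous functional calculus, and
any `θ ∈ ℝ`, the process `i ↦ tr f(θ·Sᵢ)` with `Sᵢ = X₁ + ⋯ + Xᵢ` is a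
nonnegative submartingale with respect to the natural filtration. -/
theorem trace_convex_submartingale {d n : ℕ} {Ω : Type*} [MeasurableSpace Ω]
    (μ : Measure Ω) [IsProbabilityMeasure μ]
    (X : Fin n → Ω → Matrix (Fin d) (Fin d) ℂ)
    (hX : ∀ i, MeasureTheory.StronglyMeasurable (X i))
    (hindep : ProbabilityTheory.iIndepFun X μ)
    (hsa : ∀ i ω, (X i ω).IsHermitian)
    (hmean : ∀ i, (∫ ω, X i ω ∂μ) = 0)
    (C : ℝ) (hbd : ∀ i ω, ‖X i ω‖ ≤ C)
    (f : ℝ → ℝ) (hfc : Continuous f) (hfconv : ConvexOn ℝ Set.univ f)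
    (hfnonneg : ∀ x, 0 ≤ f x) (θ : ℝ) :
    MeasureTheory.Submartingale
        (fun (i : Fin n) (ω : Ω) =>
          (Matrix.trace (cfc f (θ • ∑ j ∈ Finset.Iic i, X j ω))).re)
        (MeasureTheory.Filtration.natural X hX) μ ∧
      ∀ (i : Fin n) (ω : Ω),
        0 ≤ (Matrix.trace (cfc f (θ • ∑ j ∈ Finset.Iic i, X j ω))).re :=
  trace_convex_submartingale_general μ X hX hindep hsa hmean C hbd f hfconv hfnonneg θ
end

section
/- Let X be a random self-adjoint matrix with E X = 0 and ‖X‖ ≤ c almost surely (operator norm). Then for every θ ∈ ℝ, E exp(θX) ⪯ exp(ψ(|θ|)·E X²), where ψ(θ) = (e^{θc} − θc − 1)/c² and ⪯ is the Loewner order. -/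
/-!
For `|x| ≤ c` the exponential series gives `e^{θx} ≤ 1 + θx + ψ(|θ|) x²`, comparing
`r² (e^y - 1 - y)` and `y² (e^r - 1 - r)` term by term for `|y| ≤ r`. The continuous functional
calculus lifts this to `exp(θX) ≤ 1 + θX + ψ(|θ|) X²` for self-adjoint `X` with `‖X‖ ≤ c`;
integrating kills the linear term, and `1 + A ≤ exp A` concludes.
-/

open Matrix MeasureTheory Nat
open scoped Matrix.Norms.L2Operator MatrixOrder ComplexOrder

noncomputable def poissonPsi (c θ : ℝ) : ℝ := (Real.exp (θ * c) - θ * c - 1) / c ^ 2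

lemma poissonPsi_nonneg (c θ : ℝ) : 0 ≤ poissonPsi c θ :=
  div_nonneg (by linarith [Real.add_one_le_exp (θ * c)]) (sq_nonneg c)

namespace Real

lemma hasSum_exp_sub_one_sub (x : ℝ) :
    HasSum (fun n : ℕ => x ^ (n + 2) / (n + 2)!) (exp x - 1 - x) := by
  have h := (hasSum_nat_add_iff' 2).mpr (NormedSpace.expSeries_div_hasSum_exp (𝔸 := ℝ) x)
  simpa [← exp_eq_exp_ℝ, Finset.sum_range_succ, sub_sub] using h

lemma sq_mul_exp_sub_one_sub_le {y r : ℝ} (h : |y| ≤ r) :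
    r ^ 2 * (exp y - 1 - y) ≤ y ^ 2 * (exp r - 1 - r) := by
  refine hasSum_le (fun n => ?_) ((hasSum_exp_sub_one_sub y).mul_left _)
    ((hasSum_exp_sub_one_sub r).mul_left _)
  have hpow : y ^ (n + 2) ≤ y ^ 2 * r ^ n :=
    calc y ^ (n + 2) ≤ |y| ^ (n + 2) := by rw [← abs_pow]; exact le_abs_self _
      _ = y ^ 2 * |y| ^ n := by rw [pow_add, sq_abs, mul_comm]
      _ ≤ y ^ 2 * r ^ n := by gcongr
  rw [mul_div_assoc', mul_div_assoc']
  gcongr ?_ / _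
  calc r ^ 2 * y ^ (n + 2) ≤ r ^ 2 * (y ^ 2 * r ^ n) := by gcongr
    _ = y ^ 2 * r ^ (n + 2) := by ring

lemma exp_mul_le_one_add_add_poissonPsi_mul_sq {c x : ℝ} (hx : |x| ≤ c) (θ : ℝ) :
    exp (θ * x) ≤ 1 + θ * x + poissonPsi c |θ| * x ^ 2 := by
  rcases eq_or_ne (θ * x) 0 with h | h
  · rw [h, exp_zero]
    nlinarith [poissonPsi_nonneg c |θ|, sq_nonneg x]
  have hθ : θ ≠ 0 := left_ne_zero_of_mul h
  have hc : c ≠ 0 := ((abs_pos.2 (right_ne_zero_of_mul h)).trans_le hx).ne'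
  have key := sq_mul_exp_sub_one_sub_le (y := θ * x) (r := |θ| * c) (by rw [abs_mul]; gcongr)
  rw [mul_pow, sq_abs, mul_pow] at key
  have : exp (θ * x) - 1 - θ * x ≤ poissonPsi c |θ| * x ^ 2 := by
    rw [poissonPsi, div_mul_eq_mul_div, le_div_iff₀ (by positivity)]
    nlinarith [sq_pos_of_ne_zero hθ]
  linarith

end Real

section FunctionalCalculus

variable {A : Type*} [NormedRing A] [StarRing A] [NormedAlgebra ℝ A]

lemma IsSelfAdjoint.one_add_le_exp [ContinuousFunctionalCalculus ℝ A IsSelfAdjoint]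
    [PartialOrder A] [StarOrderedRing A] {a : A} (ha : IsSelfAdjoint a) :
    1 + a ≤ NormedSpace.exp a := by
  rw [← CFC.real_exp_eq_normedSpace_exp]
  calc 1 + a = cfc (fun x : ℝ => 1 + x) a := by rw [cfc_add .., cfc_const_one .., cfc_id' ..]
    _ ≤ cfc Real.exp a := cfc_mono fun x _ => by linarith [Real.add_one_le_exp x]

variable [StarModule ℝ A]

lemma IsSelfAdjoint.cfc_exp_mul [ContinuousFunctionalCalculus ℝ A IsSelfAdjoint] {a : A}
    (ha : IsSelfAdjoint a) (θ : ℝ) :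
    cfc (fun x => Real.exp (θ * x)) a = NormedSpace.exp (θ • a) := by
  rw [cfc_comp_const_mul θ Real.exp a,
    CFC.real_exp_eq_normedSpace_exp ((IsSelfAdjoint.all θ).smul ha)]

lemma IsSelfAdjoint.exp_smul_le_one_add_add_poissonPsi_smul_sq
    [ContinuousFunctionalCalculus ℝ A IsSelfAdjoint] [PartialOrder A] [StarOrderedRing A]
    {a : A} (ha : IsSelfAdjoint a) {c : ℝ} (hc : ∀ x ∈ spectrum ℝ a, |x| ≤ c) (θ : ℝ) :
    NormedSpace.exp (θ • a) ≤ 1 + θ • a + poissonPsi c |θ| • a ^ 2 := by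
  rw [← ha.cfc_exp_mul]
  calc cfc (fun x => Real.exp (θ * x)) a
      ≤ cfc (fun x => 1 + θ * x + poissonPsi c |θ| * x ^ 2) a :=
        cfc_mono fun x hx => Real.exp_mul_le_one_add_add_poissonPsi_mul_sq (hc x hx) θ
    _ = 1 + θ • a + poissonPsi c |θ| • a ^ 2 := by
      rw [cfc_add .., cfc_add .., cfc_const_one .., cfc_const_mul_id .., cfc_const_mul ..,
        cfc_pow_id ..]

lemma IsSelfAdjoint.norm_exp_smul_le [IsometricContinuousFunctionalCalculus ℝ A IsSelfAdjoint]
    {a : A} (ha : IsSelfAdjoint a) {c : ℝ} (hac : ‖a‖ ≤ c) (θ : ℝ) :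
    ‖NormedSpace.exp (θ • a)‖ ≤ Real.exp (|θ| * c) := by
  rw [← ha.cfc_exp_mul]
  refine norm_cfc_le (Real.exp_nonneg _) fun x hx => ?_
  rw [Real.norm_eq_abs, Real.abs_exp, Real.exp_le_exp]
  calc θ * x ≤ |θ| * |x| := by rw [← abs_mul]; exact le_abs_self _
    _ ≤ |θ| * c := by
      gcongr
      exact (IsometricContinuousFunctionalCalculus.norm_spectrum_le a hx).trans hac

variable [CompleteSpace A] [IsometricContinuousFunctionalCalculus ℝ A IsSelfAdjoint]
  [PartialOrder A] [StarOrderedRing A] [OrderClosedTopology A]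

theorem integral_exp_smul_le_exp_poissonPsi_smul {Ω : Type*} [MeasurableSpace Ω]
    {μ : Measure Ω} [IsProbabilityMeasure μ] {X : Ω → A} (hmeas : AEStronglyMeasurable X μ)
    (hsa : ∀ᵐ ω ∂μ, IsSelfAdjoint (X ω)) (hmean : ∫ ω, X ω ∂μ = 0) {c : ℝ}
    (hbd : ∀ᵐ ω ∂μ, ‖X ω‖ ≤ c) (θ : ℝ) :
    ∫ ω, NormedSpace.exp (θ • X ω) ∂μ ≤
      NormedSpace.exp (poissonPsi c |θ| • ∫ ω, X ω ^ 2 ∂μ) := by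
  have hX : Integrable X μ := .of_bound hmeas c hbd
  have hX2 : Integrable (fun ω => X ω ^ 2) μ :=
    .of_bound (hmeas.pow 2) (c ^ 2) <| hbd.mono fun ω h =>
      (norm_pow_le' _ two_pos).trans (pow_le_pow_left₀ (norm_nonneg _) h 2)
  have hexp : Integrable (fun ω => NormedSpace.exp (θ • X ω)) μ :=
    .of_bound ((continuous_iff_continuousAt.2 fun x => (NormedSpace.exp_analytic (𝕂 := ℝ)
      x).continuousAt).comp_aestronglyMeasurable (hmeas.const_smul θ)) _
      (hbd.and hsa |>.mono fun ω h => h.2.norm_exp_smul_le h.1 θ)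
  have hpointwise : ∀ᵐ ω ∂μ,
      NormedSpace.exp (θ • X ω) ≤ 1 + θ • X ω + poissonPsi c |θ| • X ω ^ 2 :=
    hbd.and hsa |>.mono fun ω h => h.2.exp_smul_le_one_add_add_poissonPsi_smul_sq
      (fun x hx => (IsometricContinuousFunctionalCalculus.norm_spectrum_le _ hx).trans h.1) θ
  have hmoment : IsSelfAdjoint (∫ ω, X ω ^ 2 ∂μ) :=
    .of_nonneg (integral_nonneg_of_ae (hsa.mono fun ω h => h.sq_nonneg))
  calc ∫ ω, NormedSpace.exp (θ • X ω) ∂μ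
      ≤ ∫ ω, (1 + θ • X ω + poissonPsi c |θ| • X ω ^ 2) ∂μ :=
        integral_mono_ae hexp (by fun_prop) hpointwise
    _ = 1 + poissonPsi c |θ| • ∫ ω, X ω ^ 2 ∂μ := by
      rw [integral_add (by fun_prop) (by fun_prop), integral_add (by fun_prop) (by fun_prop),
        integral_smul, integral_smul, hmean]
      simp
    _ ≤ NormedSpace.exp (poissonPsi c |θ| • ∫ ω, X ω ^ 2 ∂μ) :=
      ((IsSelfAdjoint.all _).smul hmoment).one_add_le_exp

end FunctionalCalculus

lemma Matrix.isClosed_setOf_posSemidef {n 𝕜 : Type*} [Fintype n] [RCLike 𝕜] :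
    IsClosed {A : Matrix n n 𝕜 | A.PosSemidef} := by
  simp only [Matrix.posSemidef_iff_dotProduct_mulVec, Set.ofPred_and, Set.ofPred_forall]
  exact (isClosed_eq (by fun_prop) (by fun_prop)).inter
    (isClosed_iInter fun x => isClosed_le (by fun_prop) (by fun_prop))

instance Matrix.instOrderClosedTopology {n 𝕜 : Type*} [Fintype n] [RCLike 𝕜] :
    OrderClosedTopology (Matrix n n 𝕜) where
  isClosed_le' := isClosed_le_of_isClosed_nonneg <| by
    simpa only [Matrix.nonneg_iff_posSemidef] using Matrix.isClosed_setOf_posSemidef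

theorem matrix_mgf_bound_general {d : ℕ} {Ω : Type*} [MeasurableSpace Ω]
    (μ : Measure Ω) [IsProbabilityMeasure μ]
    (X : Ω → Matrix (Fin d) (Fin d) ℝ) (hmeas : AEStronglyMeasurable X μ)
    (c : ℝ)
    (hsa : ∀ ω, (X ω).IsHermitian)
    (hmean : (∫ ω, X ω ∂μ) = 0)
    (hbd : ∀ᵐ ω ∂μ, ‖X ω‖ ≤ c) :
    ∀ θ : ℝ,
      (NormedSpace.exp
          (((Real.exp (|θ| * c) - |θ| * c - 1) / c ^ 2) • ∫ ω, (X ω) ^ 2 ∂μ)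
        - ∫ ω, NormedSpace.exp (θ • X ω) ∂μ).PosSemidef :=
  fun θ => Matrix.le_iff.mp <| integral_exp_smul_le_exp_poissonPsi_smul hmeas
    (ae_of_all _ fun ω => (hsa ω).isSelfAdjoint) hmean hbd θ

/-- Matrix MGF bound: if `X` is a random symmetric matrix with `E X = 0` and
`‖X‖ ≤ c` a.s. (operator norm), then for every `θ ∈ ℝ`,
`E exp(θX) ⪯ exp(ψ(|θ|)·E X²)` in the Loewner order, where
`ψ(θ) = (e^{θc} − θc − 1)/c²`. -/
theorem matrix_mgf_bound {d : ℕ} {Ω : Type*} [MeasurableSpace Ω]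
    (μ : Measure Ω) [IsProbabilityMeasure μ]
    (X : Ω → Matrix (Fin d) (Fin d) ℝ) (hmeas : AEStronglyMeasurable X μ)
    (c : ℝ) (hc : 0 < c)
    (hsa : ∀ ω, (X ω).IsHermitian)
    (hmean : (∫ ω, X ω ∂μ) = 0)
    (hbd : ∀ᵐ ω ∂μ, ‖X ω‖ ≤ c) :
    ∀ θ : ℝ,
      (NormedSpace.exp
          (((Real.exp (|θ| * c) - |θ| * c - 1) / c ^ 2) • ∫ ω, (X ω) ^ 2 ∂μ)
        - ∫ ω, NormedSpace.exp (θ • X ω) ∂μ).PosSemidef :=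
  matrix_mgf_bound_general μ X hmeas c hsa hmean hbd
end

section
/- Let X be a random self-adjoint matrix with E X = 0 and ‖X‖ ≤ c a.s. Then for every θ ∈ ℝ, the matrix sum Σ_{k ≥ 2} E[(θX)ᵏ/k!] ⪯ ψ(|θ|)·E X² where ψ(θ) = (e^{θc} − θc − 1)/c²; consequently E exp(θX) ⪯ I + ψ(|θ|)·E X². -/
/-!
For a symmetric matrix `A` with `‖A‖ ≤ c`, write `A ^ (k + 2) = A * A ^ k * A`: since the middle
factor has operator norm at most `c ^ k`, this gives `A ^ (k + 2) ⪯ c ^ k • A ^ 2` in the Loewner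
order. Applied to `θ • X`, taking expectations and summing over `k` (the Loewner order is closed)
bounds `∑_{k ≥ 2} E[(θX)ᵏ/k!]` by `∑_k (|θ| c)ᵏ θ² / (k + 2)! • E[X²] = ψ(|θ|) • E[X²]`.
Dominated convergence identifies that series with `E[exp(θX)] - 1`, the terms `k = 0, 1` of the
exponential series contributing `1` and `θ • E[X] = 0`.
-/

open Matrix MeasureTheory
open scoped Matrix.Norms.L2Operator MatrixOrder Nat

theorem Real.hasSum_pow_add_two_div_factorial (t : ℝ) :
    HasSum (fun k : ℕ => t ^ (k + 2) / (k + 2)!) (Real.exp t - t - 1) := by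
  have h := (hasSum_nat_add_iff' 2).mpr (NormedSpace.expSeries_div_hasSum_exp t)
  simpa [Finset.sum_range_succ, ← Real.exp_eq_exp_ℝ, sub_sub, add_comm] using h

theorem hasSum_inv_factorial_mul_pow_mul_sq (θ : ℝ) {c : ℝ} (hc : c ≠ 0) :
    HasSum (fun k : ℕ => ((k + 2)! : ℝ)⁻¹ * (|θ| * c) ^ k * θ ^ 2)
      ((Real.exp (|θ| * c) - |θ| * c - 1) / c ^ 2) := by
  refine ((Real.hasSum_pow_add_two_div_factorial (|θ| * c)).div_const (c ^ 2)).congr_fun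
    fun k => ?_
  rw [pow_add, mul_pow |θ| c 2, sq_abs]
  field_simp

theorem norm_pow_le_norm_one_add {R : Type*} [SeminormedRing R] (a : R) (n : ℕ) :
    ‖a ^ n‖ ≤ ‖(1 : R)‖ + ‖a‖ ^ n := by
  rcases n.eq_zero_or_pos with rfl | hn
  · simp
  · exact (norm_pow_le' a hn).trans (le_add_of_nonneg_left (norm_nonneg _))

section Integral

variable {Ω 𝔸 : Type*} [MeasurableSpace Ω] {μ : Measure Ω} [NormedRing 𝔸] {Y : Ω → 𝔸}
  {C : ℝ}

theorem integrable_pow_of_ae_norm_le [IsFiniteMeasure μ] (hY : AEStronglyMeasurable Y μ)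
    (hC : ∀ᵐ ω ∂μ, ‖Y ω‖ ≤ C) (n : ℕ) : Integrable (fun ω => Y ω ^ n) μ :=
  .of_bound (hY.pow n) (‖(1 : 𝔸)‖ + C ^ n) <| hC.mono fun _ h =>
    (norm_pow_le_norm_one_add _ n).trans (by gcongr)

variable [NormedAlgebra ℝ 𝔸] [CompleteSpace 𝔸]

theorem hasSum_integral_expSeries [IsFiniteMeasure μ] (hY : AEStronglyMeasurable Y μ)
    (hC : ∀ᵐ ω ∂μ, ‖Y ω‖ ≤ C) :
    HasSum (fun n => ∫ ω, (n ! : ℝ)⁻¹ • Y ω ^ n ∂μ) (∫ ω, NormedSpace.exp (Y ω) ∂μ) := by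
  refine hasSum_integral_of_dominated_convergence (fun n _ => (n ! : ℝ)⁻¹ * (‖(1 : 𝔸)‖ + C ^ n))
    (fun n => (hY.pow n).const_smul _) (fun n => hC.mono fun ω h => ?_)
    (ae_of_all _ fun _ => ?_) (integrable_const _)
    (ae_of_all _ fun ω => NormedSpace.exp_series_hasSum_exp' (𝕂 := ℝ) (Y ω))
  · rw [norm_smul, Real.norm_of_nonneg (by positivity)]
    exact mul_le_mul_of_nonneg_left ((norm_pow_le_norm_one_add _ n).trans
      (by gcongr)) (by positivity)
  · refine (((Real.summable_pow_div_factorial 1).mul_left ‖(1 : 𝔸)‖).add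
      (Real.summable_pow_div_factorial C)).congr fun n => ?_
    simp only [one_pow]
    field_simp

theorem hasSum_integral_expSeries_add_two [IsProbabilityMeasure μ] (hY : AEStronglyMeasurable Y μ)
    (hC : ∀ᵐ ω ∂μ, ‖Y ω‖ ≤ C) (hmean : ∫ ω, Y ω ∂μ = 0) :
    HasSum (fun k => ∫ ω, ((k + 2)! : ℝ)⁻¹ • Y ω ^ (k + 2) ∂μ)
      (∫ ω, NormedSpace.exp (Y ω) ∂μ - 1) := by
  have h := (hasSum_nat_add_iff' (f := fun n => ∫ ω, (n ! : ℝ)⁻¹ • Y ω ^ n ∂μ) 2).mpr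
    (hasSum_integral_expSeries hY hC)
  have h0 : ∫ ω, ((0)! : ℝ)⁻¹ • Y ω ^ 0 ∂μ = 1 := by simp
  have h1 : ∫ ω, ((1)! : ℝ)⁻¹ • Y ω ^ 1 ∂μ = 0 := by simpa using hmean
  rwa [Finset.sum_range_succ, Finset.sum_range_one, h0, h1, add_zero] at h

end Integral

namespace Matrix

variable {n : Type*} [Fintype n]

open scoped ComplexOrder in
theorem isClosed_setOf_posSemidef_s13 {𝕜 : Type*} [RCLike 𝕜] :
    IsClosed {A : Matrix n n 𝕜 | A.PosSemidef} := by
  simp only [posSemidef_iff_dotProduct_mulVec, Set.ofPred_and, Set.ofPred_forall]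
  refine .inter (isClosed_eq continuous_id.matrix_conjTranspose continuous_id) <|
    isClosed_iInter fun x => isClosed_le continuous_const ?_
  exact continuous_const.dotProduct (continuous_id.matrix_mulVec continuous_const)

instance orderClosedTopology {𝕜 : Type*} [RCLike 𝕜] : OrderClosedTopology (Matrix n n 𝕜) :=
  ⟨isClosed_le_of_isClosed_nonneg <| by
    simpa only [nonneg_iff_posSemidef] using isClosed_setOf_posSemidef_s13⟩

variable [DecidableEq n]

theorem l2_norm_pow_mulVec_le {𝕜 : Type*} [RCLike 𝕜] (A : Matrix n n 𝕜) (k : ℕ) (x : n → 𝕜) :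
    ‖(EuclideanSpace.equiv n 𝕜).symm (A ^ k *ᵥ x)‖
      ≤ ‖A‖ ^ k * ‖(EuclideanSpace.equiv n 𝕜).symm x‖ := by
  induction k with
  | zero => simp
  | succ k ih =>
    calc _ = ‖(EuclideanSpace.equiv n 𝕜).symm (A *ᵥ (A ^ k *ᵥ x))‖ := by
          rw [pow_succ', ← mulVec_mulVec]
      _ ≤ ‖A‖ * ‖(EuclideanSpace.equiv n 𝕜).symm (A ^ k *ᵥ x)‖ := 
          l2_opNorm_mulVec A ((EuclideanSpace.equiv n 𝕜).symm (A ^ k *ᵥ x))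
      _ ≤ ‖A‖ * (‖A‖ ^ k * ‖(EuclideanSpace.equiv n 𝕜).symm x‖) := by gcongr
      _ = _ := by ring

theorem IsHermitian.pow_add_two_le {A : Matrix n n ℝ} (hA : A.IsHermitian) {c : ℝ}
    (hc : ‖A‖ ≤ c) (k : ℕ) : A ^ (k + 2) ≤ c ^ k • A ^ 2 := by
  have hsymm (x y : n → ℝ) : x ⬝ᵥ (A *ᵥ y) = (A *ᵥ x) ⬝ᵥ y := by
    rw [dotProduct_mulVec, ← mulVec_transpose, ← conjTranspose_eq_transpose_of_trivial, hA.eq]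
  refine le_iff.mpr <| .of_dotProduct_mulVec_nonneg
    (((hA.pow 2).smul (.all _)).sub (hA.pow _)) fun x => ?_
  let e := (EuclideanSpace.equiv n ℝ).symm
  set u := A *ᵥ x
  have hsq : x ⬝ᵥ (A ^ 2 *ᵥ x) = ‖e u‖ ^ 2 := by
    rw [pow_two, ← mulVec_mulVec, hsymm, EuclideanSpace.real_norm_sq_eq]
    simp [e, u, dotProduct, sq]
  have hpow : x ⬝ᵥ (A ^ (k + 2) *ᵥ x) ≤ c ^ k * ‖e u‖ ^ 2 :=
    calc x ⬝ᵥ (A ^ (k + 2) *ᵥ x) = u ⬝ᵥ (A ^ k *ᵥ u) := by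
          rw [pow_succ, pow_succ', ← mulVec_mulVec, ← mulVec_mulVec, hsymm]
      _ ≤ ‖e (A ^ k *ᵥ u)‖ * ‖e u‖ := by
          simpa [e, EuclideanSpace.inner_eq_star_dotProduct] using
            real_inner_le_norm (e (A ^ k *ᵥ u)) (e u)
      _ ≤ ‖A‖ ^ k * ‖e u‖ * ‖e u‖ := by gcongr; exact l2_norm_pow_mulVec_le A k u
      _ ≤ c ^ k * ‖e u‖ ^ 2 := by rw [mul_assoc, ← sq]; gcongr
  simp only [star_trivial, sub_mulVec, smul_mulVec, dotProduct_sub, dotProduct_smul, smul_eq_mul]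
  rw [hsq]
  linarith

theorem integral_smul_pow_add_two_le {Ω : Type*} [MeasurableSpace Ω] {μ : Measure Ω}
    [IsFiniteMeasure μ] {X : Ω → Matrix n n ℝ} (hX : AEStronglyMeasurable X μ)
    (hsa : ∀ ω, (X ω).IsHermitian) {c : ℝ} (hbd : ∀ᵐ ω ∂μ, ‖X ω‖ ≤ c) (θ : ℝ) (k : ℕ) :
    ∫ ω, ((k + 2)! : ℝ)⁻¹ • (θ • X ω) ^ (k + 2) ∂μ
      ≤ (((k + 2)! : ℝ)⁻¹ * (|θ| * c) ^ k * θ ^ 2) • ∫ ω, X ω ^ 2 ∂μ := by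
  have hθX : ∀ᵐ ω ∂μ, ‖θ • X ω‖ ≤ |θ| * c :=
    hbd.mono fun ω h => by rw [norm_smul, Real.norm_eq_abs]; gcongr
  rw [← integral_smul]
  refine integral_mono_ae ((integrable_pow_of_ae_norm_le (hX.const_smul θ) hθX _).fun_smul _)
    ((integrable_pow_of_ae_norm_le hX hbd 2).fun_smul _) ?_
  filter_upwards [hθX] with ω hω
  calc ((k + 2)! : ℝ)⁻¹ • (θ • X ω) ^ (k + 2)
      ≤ ((k + 2)! : ℝ)⁻¹ • ((|θ| * c) ^ k • (θ • X ω) ^ 2) :=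
        smul_le_smul_of_nonneg_left (((hsa ω).smul (.all θ)).pow_add_two_le hω k) (by positivity)
    _ = _ := by rw [smul_pow, smul_smul, smul_smul]

end Matrix

/-- For a random symmetric matrix `X` with `E X = 0` and `‖X‖ ≤ c` a.s., for every
`θ ∈ ℝ`, the matrix series `Σ_{k ≥ 2} E[(θX)ᵏ/k!] ⪯ ψ(|θ|)·E X²` in the Loewner
order, where `ψ(θ) = (e^{θc} − θc − 1)/c²`; consequently
`E exp(θX) ⪯ I + ψ(|θ|)·E X²`. -/
theorem matrix_mgf_series_bound {d : ℕ} {Ω : Type*} [MeasurableSpace Ω]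
    (μ : Measure Ω) [IsProbabilityMeasure μ]
    (X : Ω → Matrix (Fin d) (Fin d) ℝ) (hmeas : AEStronglyMeasurable X μ)
    (c : ℝ) (hc : 0 < c)
    (hsa : ∀ ω, (X ω).IsHermitian)
    (hmean : (∫ ω, X ω ∂μ) = 0)
    (hbd : ∀ᵐ ω ∂μ, ‖X ω‖ ≤ c) :
    ∀ θ : ℝ,
      ((((Real.exp (|θ| * c) - |θ| * c - 1) / c ^ 2) • ∫ ω, (X ω) ^ 2 ∂μ)
          - ∑' k : ℕ, ∫ ω, ((Nat.factorial (k + 2) : ℝ)⁻¹) • (θ • X ω) ^ (k + 2) ∂μ).PosSemidef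
        ∧
      ((1 + (((Real.exp (|θ| * c) - |θ| * c - 1) / c ^ 2) • ∫ ω, (X ω) ^ 2 ∂μ))
          - ∫ ω, NormedSpace.exp (θ • X ω) ∂μ).PosSemidef := by
  intro θ
  have hθX : ∀ᵐ ω ∂μ, ‖θ • X ω‖ ≤ |θ| * c :=
    hbd.mono fun ω h => by rw [norm_smul, Real.norm_eq_abs]; gcongr
  have hseries := hasSum_integral_expSeries_add_two (Y := fun ω => θ • X ω)
    (hmeas.const_smul θ) hθX (by rw [integral_smul, hmean, smul_zero])
  have hle : ∫ ω, NormedSpace.exp (θ • X ω) ∂μ - 1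
      ≤ ((Real.exp (|θ| * c) - |θ| * c - 1) / c ^ 2) • ∫ ω, X ω ^ 2 ∂μ :=
    hasSum_le (integral_smul_pow_add_two_le hmeas hsa hbd θ) hseries
      ((hasSum_inv_factorial_mul_pow_mul_sq θ hc.ne').smul_const _)
  rw [hseries.tsum_eq]
  exact ⟨le_iff.mp hle, le_iff.mp (sub_le_iff_le_add'.mp hle)⟩
end

section
/- For a positive semi-definite self-adjoint operator V with finite trace and any s ≥ 0, tr(exp(sV) − I) ≤ exp(s·tr(V)) − 1. -/
/-!
Diagonalise `A = s • V`: its eigenvalues `λᵢ` are nonnegative, `tr (exp A - 1) = ∑ (exp λᵢ - 1)`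
and `s · tr V = ∑ λᵢ`. The claim is then superadditivity of `x ↦ exp x - 1` on `[0, ∞)`, which
comes from `(exp a - 1) (exp b - 1) ≥ 0`.
-/

open Matrix

lemma Real.sum_exp_sub_one_le {ι : Type*} (s : Finset ι) {f : ι → ℝ} (hf : ∀ i ∈ s, 0 ≤ f i) :
    ∑ i ∈ s, (Real.exp (f i) - 1) ≤ Real.exp (∑ i ∈ s, f i) - 1 := by
  induction s using Finset.cons_induction with
  | empty => simp
  | cons a s ha ih =>
    rw [Finset.forall_mem_cons] at hf
    rw [Finset.sum_cons, Finset.sum_cons, Real.exp_add]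
    have hprod : 0 ≤ (Real.exp (f a) - 1) * (Real.exp (∑ i ∈ s, f i) - 1) :=
      mul_nonneg (sub_nonneg.2 (Real.one_le_exp hf.1))
        (sub_nonneg.2 (Real.one_le_exp (Finset.sum_nonneg hf.2)))
    linarith [ih hf.2]

namespace Matrix.IsHermitian

variable {n 𝕜 : Type*} [RCLike 𝕜] [Fintype n] [DecidableEq n] {A : Matrix n n 𝕜}

lemma trace_cfc (hA : A.IsHermitian) (f : ℝ → ℝ) :
    (cfc f A).trace = ∑ i, (f (hA.eigenvalues i) : 𝕜) := by
  rw [hA.cfc_eq, IsHermitian.cfc, Unitary.conjStarAlgAut_apply, trace_mul_cycle,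
    Unitary.coe_star_mul_self, one_mul, trace_diagonal]
  rfl

open scoped Matrix.Norms.L2Operator in
lemma exp_eq_cfc (hA : A.IsHermitian) : NormedSpace.exp A = cfc Real.exp A := by
  -- `NormedSpace.exp` only sees the topology, so any compatible algebra norm may be chosen.
  let _ : NormedAlgebra ℝ (Matrix n n 𝕜) :=
    { norm_smul_le r B := by
        rw [← algebraMap_smul 𝕜 r B, norm_smul, RCLike.norm_ofReal, Real.norm_eq_abs] }
  exact (CFC.real_exp_eq_normedSpace_exp hA.isSelfAdjoint).symm

lemma trace_exp (hA : A.IsHermitian) :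
    (NormedSpace.exp A).trace = ∑ i, (Real.exp (hA.eigenvalues i) : 𝕜) := by
  rw [hA.exp_eq_cfc, hA.trace_cfc]

end Matrix.IsHermitian

/-- For a positive semi-definite matrix `V` and `s ≥ 0`,
`tr(exp(sV) − I) ≤ exp(s·tr V) − 1`. -/
theorem trace_exp_sub_one_le {n : Type*} [Fintype n] [DecidableEq n]
    (V : Matrix n n ℝ) (hV : V.PosSemidef) (s : ℝ) (hs : 0 ≤ s) :
    ((NormedSpace.exp (s • V) - 1).trace : ℝ)
      ≤ Real.exp (s * (V.trace : ℝ)) - 1 := by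
  have hA : (s • V).PosSemidef := hV.smul hs
  have htrace : s * V.trace = ∑ i, hA.1.eigenvalues i := by
    rw [← smul_eq_mul, ← trace_smul, hA.1.trace_eq_sum_eigenvalues]
    rfl
  rw [trace_sub, hA.1.trace_exp, trace_one, htrace]
  simpa [Finset.sum_sub_distrib] using
    Real.sum_exp_sub_one_le Finset.univ fun i _ => hA.eigenvalues_nonneg i
end

section
/- Let f(x) = (T/x)·exp(−(x/c²)·h(cr/x)) for x > 0, where h(u) = (1+u)log(1+u) − u, and T, c, r > 0. Then d/dx log f(x) = (1/x)·[(r/c)(1 − log(1+u)/u) − 1] with u = cr/x; in particular, if r > c then f is strictly increasing on some interval (0, U), and if r < c then f is strictly decreasing on some interval (0, U). -/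
/-!
With `u = cr/x`, the logarithmic derivative of `f` is `(1/x)((r/c)(1 - φ(u)) - 1)` where
`φ(u) = log (1 + u) / u` is positive and tends to `0` as `u → ∞`, i.e. as `x → 0⁺`.
If `r > c` the bracket tends to `r/c - 1 > 0`, so it is positive on some `(0, U)`;
if `r < c` it is below `r/c - 1 < 0` for every `x > 0`.
-/

open Real Set Filter Topology Asymptotics

noncomputable def bennettRate (u : ℝ) : ℝ := (1 + u) * log (1 + u) - u

lemma hasDerivAt_bennettRate {u : ℝ} (hu : 1 + u ≠ 0) :
    HasDerivAt bennettRate (log (1 + u)) u := by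
  have h1 : HasDerivAt (fun v : ℝ => 1 + v) 1 u := (hasDerivAt_id u).const_add 1
  refine ((h1.mul (h1.log hu)).sub (hasDerivAt_id u)).congr_deriv ?_
  field_simp
  ring

lemma hasDerivAt_mul_bennettRate_div (a : ℝ) {x : ℝ} (hx : x ≠ 0) (hu : 1 + a / x ≠ 0) :
    HasDerivAt (fun y => y * bennettRate (a / y)) (log (1 + a / x) - a / x) x := by
  -- the chain-rule terms collapse because `h(u) - u h'(u) = log (1 + u) - u`
  have hdiv : HasDerivAt (fun y => a / y) (-(a / x ^ 2)) x := by
    simpa [div_eq_mul_inv] using (hasDerivAt_inv hx).const_mul a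
  refine ((hasDerivAt_id x).mul ((hasDerivAt_bennettRate hu).comp x hdiv)).congr_deriv ?_
  simp only [Function.comp, bennettRate, id]
  field_simp
  ring

noncomputable def bennettBound (T c r x : ℝ) : ℝ :=
  T / x * exp (-(x / c ^ 2) * bennettRate (c * r / x))

lemma bennettBound_pos {T c r x : ℝ} (hT : 0 < T) (hx : 0 < x) : 0 < bennettBound T c r x := by
  unfold bennettBound; positivity

lemma hasDerivAt_log_bennettBound {T c r x : ℝ} (hT : 0 < T) (hc : 0 < c) (hr : 0 < r)
    (hx : 0 < x) :
    HasDerivAt (fun y => log (bennettBound T c r y))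
      ((1 / x) * (r / c * (1 - log (1 + c * r / x) / (c * r / x)) - 1)) x := by
  have hlog : (fun y => log (bennettBound T c r y)) =ᶠ[𝓝 x]
      fun y => log T - log y - y * bennettRate (c * r / y) / c ^ 2 := by
    filter_upwards [Ioi_mem_nhds hx] with y hy
    rw [bennettBound, log_mul (by positivity [mem_Ioi.mp hy]) (exp_ne_zero _), log_exp,
      log_div hT.ne' (ne_of_gt hy)]
    ring
  have hu : 1 + c * r / x ≠ 0 := by positivity
  refine ((((hasDerivAt_const x (log T)).sub (hasDerivAt_log hx.ne')).sub
    ((hasDerivAt_mul_bennettRate_div (c * r) hx.ne' hu).div_const (c ^ 2))).congr_of_eventuallyEq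
    hlog).congr_deriv ?_
  field_simp
  ring

lemma tendsto_log_one_add_div_self_atTop :
    Tendsto (fun u : ℝ => log (1 + u) / u) atTop (𝓝 0) := by
  have hlog : (fun u : ℝ => log (1 + u)) =o[atTop] (fun u => 1 + u) :=
    isLittleO_log_id_atTop.comp_tendsto (tendsto_atTop_add_const_left _ 1 tendsto_id)
  have hlin : (fun u : ℝ => 1 + u) =O[atTop] (fun u => u) :=
    (isLittleO_const_id_atTop 1).isBigO.add (isBigO_refl _ _)
  exact (hlog.trans_isBigO hlin).tendsto_div_nhds_zero

lemma eventually_logDeriv_bennettBound_pos {c r : ℝ} (hc : 0 < c) (hr : 0 < r) (hcr : c < r) :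
    ∀ᶠ x in 𝓝[>] 0, 0 < (1 / x) * (r / c * (1 - log (1 + c * r / x) / (c * r / x)) - 1) := by
  have hu : Tendsto (fun x : ℝ => c * r / x) (𝓝[>] 0) atTop := by
    simpa only [div_eq_mul_inv] using tendsto_inv_nhdsGT_zero.const_mul_atTop (by positivity)
  have hlim : Tendsto (fun x => r / c * (1 - log (1 + c * r / x) / (c * r / x)) - 1) (𝓝[>] 0)
      (𝓝 (r / c * (1 - 0) - 1)) :=
    ((tendsto_log_one_add_div_self_atTop.comp hu).const_sub 1 |>.const_mul _).sub_const 1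
  have hpos : 0 < r / c * (1 - 0) - 1 := by
    rw [sub_zero, mul_one, sub_pos, one_lt_div hc]; exact hcr
  filter_upwards [hlim.eventually (lt_mem_nhds hpos), self_mem_nhdsWithin] with x hx hx0
  exact mul_pos (one_div_pos.mpr hx0) hx

lemma logDeriv_bennettBound_neg {c r x : ℝ} (hc : 0 < c) (hr : 0 < r) (hrc : r < c) (hx : 0 < x) :
    (1 / x) * (r / c * (1 - log (1 + c * r / x) / (c * r / x)) - 1) < 0 := by
  have hu : 0 < c * r / x := by positivity
  have hratio : 0 < log (1 + c * r / x) / (c * r / x) := div_pos (log_pos (by linarith)) hu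
  have hrc' : r / c < 1 := (div_lt_one hc).mpr hrc
  refine mul_neg_of_pos_of_neg (by positivity) ?_
  nlinarith [div_pos hr hc]

lemma strictMonoOn_of_hasDerivAt_log_pos {f f' : ℝ → ℝ} {D : Set ℝ} (hD : Convex ℝ D)
    (hpos : ∀ x ∈ D, 0 < f x) (hf : ∀ x ∈ D, HasDerivAt (fun y => log (f y)) (f' x) x)
    (hf' : ∀ x ∈ interior D, 0 < f' x) : StrictMonoOn f D := by
  have hlog : StrictMonoOn (fun y => log (f y)) D :=
    strictMonoOn_of_deriv_pos hD (fun x hx => (hf x hx).continuousAt.continuousWithinAt)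
      fun x hx => (hf x (interior_subset hx)).deriv ▸ hf' x hx
  exact fun a ha b hb hab => (log_lt_log_iff (hpos a ha) (hpos b hb)).mp (hlog ha hb hab)

lemma strictAntiOn_of_hasDerivAt_log_neg {f f' : ℝ → ℝ} {D : Set ℝ} (hD : Convex ℝ D)
    (hpos : ∀ x ∈ D, 0 < f x) (hf : ∀ x ∈ D, HasDerivAt (fun y => log (f y)) (f' x) x)
    (hf' : ∀ x ∈ interior D, f' x < 0) : StrictAntiOn f D := by
  have hlog : StrictAntiOn (fun y => log (f y)) D :=
    strictAntiOn_of_deriv_neg hD (fun x hx => (hf x hx).continuousAt.continuousWithinAt)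
      fun x hx => (hf x (interior_subset hx)).deriv ▸ hf' x hx
  exact fun a ha b hb hab => (log_lt_log_iff (hpos b hb) (hpos a ha)).mp (hlog ha hb hab)

/-- Non-monotonicity of the intrinsic-dimension Bennett bound in `σ² = x`. For
`f(x) = (T/x)·exp(−(x/c²)·h(cr/x))` with `h(u) = (1+u)log(1+u) − u` and
`T, c, r > 0`: the derivative of `log ∘ f` at `x > 0` equals
`(1/x)·[(r/c)(1 − log(1+u)/u) − 1]` with `u = cr/x`; if `r > c` then `f` is
strictly increasing on some interval `(0, U)` with `U > 0`, and if `r < c`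
then `f` is strictly decreasing on some such interval. -/
theorem bennett_bound_not_monotone (T c r : ℝ) (hT : 0 < T) (hc : 0 < c)
    (hr : 0 < r)
    (f : ℝ → ℝ)
    (hf : ∀ x : ℝ, f x =
      T / x * Real.exp (-(x / c ^ 2) *
        ((1 + c * r / x) * Real.log (1 + c * r / x) - c * r / x))) :
    (∀ x : ℝ, 0 < x →
      HasDerivAt (fun y => Real.log (f y))
        ((1 / x) *
          (r / c * (1 - Real.log (1 + c * r / x) / (c * r / x)) - 1)) x) ∧
    (c < r → ∃ U : ℝ, 0 < U ∧ StrictMonoOn f (Ioo 0 U)) ∧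
    (r < c → ∃ U : ℝ, 0 < U ∧ StrictAntiOn f (Ioo 0 U)) := by
  obtain rfl : f = bennettBound T c r := funext hf
  have hderiv (x : ℝ) (hx : 0 < x) := hasDerivAt_log_bennettBound hT hc hr hx
  refine ⟨hderiv, fun hcr => ?_, fun hrc => ?_⟩
  · obtain ⟨U, hU, hsub⟩ :=
      mem_nhdsGT_iff_exists_Ioo_subset.mp (eventually_logDeriv_bennettBound_pos hc hr hcr)
    exact ⟨U, hU, strictMonoOn_of_hasDerivAt_log_pos (convex_Ioo 0 U)
      (fun x hx => bennettBound_pos hT hx.1) (fun x hx => hderiv x hx.1)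
      fun x hx => hsub (interior_subset hx)⟩
  · exact ⟨1, one_pos, strictAntiOn_of_hasDerivAt_log_neg (convex_Ioo 0 1)
      (fun x hx => bennettBound_pos hT hx.1) (fun x hx => hderiv x hx.1)
      fun x hx => logDeriv_bennettBound_neg hc hr hrc (interior_subset hx).1⟩
end
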